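/- arXiv:2310.14991 — 2 statements merged into one kernel-verified Lean document; each statement's English description precedes it below -/
import Mathlib

section
/- Let k̃, k, n, ñ ∈ ℕ with k̃ ≤ k < n ≤ ñ, and suppose there exists an impartial and α̃-optimal (ñ, k̃)-selection mechanism. Then there exists an impartial and α-optimal (n, k)-selection mechanism with α = (k̃/k)·α̃. -/
open Finset

/-- A valid weight matrix: nonnegative entries and zero diagonal. -/
def IsValidMatrix {n : ℕ} (A : Matrix (Fin n) (Fin n) ℝ) : Prop :=
  (∀ i j, 0 ≤ A i j) ∧ ∀ i, A i i = 0

/-- Score of a subset `S` of agents: total weight of votes received by members of `S`. -/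
def score {n : ℕ} (A : Matrix (Fin n) (Fin n) ℝ) (S : Finset (Fin n)) : ℝ :=
  ∑ i : Fin n, ∑ j ∈ S, A i j

/-- The maximum score over all subsets of cardinality `k`. -/
noncomputable def optScore {n : ℕ} (k : ℕ) (A : Matrix (Fin n) (Fin n) ℝ) : ℝ :=
  sSup {x : ℝ | ∃ S : Finset (Fin n), S.card = k ∧ score A S = x}

/-- Impartiality: an agent cannot influence its own selection. -/
def Impartial {n : ℕ} (f : Matrix (Fin n) (Fin n) ℝ → Finset (Fin n)) : Prop :=
  ∀ A A' : Matrix (Fin n) (Fin n) ℝ, IsValidMatrix A → IsValidMatrix A' →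
    ∀ i : Fin n, (∀ i', i' ≠ i → A i' = A' i') → (i ∈ f A ↔ i ∈ f A')

/-- `α`-optimality of an `(n,k)`-selection mechanism. -/
def AlphaOptimal {n : ℕ} (k : ℕ) (f : Matrix (Fin n) (Fin n) ℝ → Finset (Fin n))
    (α : ℝ) : Prop :=
  ∀ A : Matrix (Fin n) (Fin n) ℝ, IsValidMatrix A → α * optScore k A ≤ score A (f A)

/-!
Embed the `n` agents as the first `n` of `ñ` agents, the dummies casting and receiving no votes,
run the `(ñ, k̃)`-mechanism and keep the real agents it selects. Impartiality survives because an
agent's row of the padded matrix depends only on its own row, and the selected set scores exactly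
what its real part scores. For optimality, repeatedly discarding a least-voted member of an
optimal `k`-set leaves a `k̃`-set with at least a `k̃ / k` fraction of its score, so the optimum
over `k̃`-sets of the padded matrix is at least `k̃ / k` times the optimum over `k`-sets.
-/

section Averaging

variable {R ι : Type*} [DecidableEq ι]

theorem exists_subset_card_eq_mul_sum_le [CommRing R] [LinearOrder R] [IsStrictOrderedRing R]
    (c : ι → R) {m : ℕ} :
    ∀ (k : ℕ) (S : Finset ι), S.card = k → m ≤ k →
      ∃ T ⊆ S, T.card = m ∧ (m : R) * ∑ i ∈ S, c i ≤ k * ∑ i ∈ T, c i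
  | 0, S, _, hm => ⟨∅, empty_subset S, by simp [Nat.le_zero.1 hm], by simp [Nat.le_zero.1 hm]⟩
  | k + 1, S, hS, hm => by
    rcases hm.eq_or_lt with rfl | hmk
    · exact ⟨S, subset_rfl, hS, le_rfl⟩
    rcases m.eq_zero_or_pos with rfl | hm0
    · exact ⟨∅, empty_subset S, card_empty, by simp⟩
    -- Dropping a cheapest element keeps at least a `k / (k + 1)` share of the total.
    obtain ⟨j, hjS, hj⟩ := S.exists_min_image c (card_pos.1 (by omega))
    obtain ⟨T, hTS, hT, hTsum⟩ := exists_subset_card_eq_mul_sum_le c (m := m) k (S.erase j)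
      (by rw [card_erase_of_mem hjS, hS]; rfl) (by omega)
    refine ⟨T, hTS.trans (erase_subset j S), hT, ?_⟩
    have hmin : ((k : R) + 1) * c j ≤ ∑ i ∈ S, c i := by
      simpa [hS, nsmul_eq_mul] using S.card_nsmul_le_sum c (c j) hj
    have hsplit := sum_erase_add S c hjS
    have hdrop : (k : R) * ∑ i ∈ S, c i ≤ (k + 1) * ∑ i ∈ S.erase j, c i := by
      linear_combination hmin - ((k : R) + 1) * hsplit
    have hk : (0 : R) < k := by exact_mod_cast (show 0 < k by omega)
    refine le_of_mul_le_mul_left ?_ hk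
    push_cast
    calc (k : R) * (m * ∑ i ∈ S, c i) = m * (k * ∑ i ∈ S, c i) := by ring
      _ ≤ m * ((k + 1) * ∑ i ∈ S.erase j, c i) := by gcongr
      _ = (k + 1) * (m * ∑ i ∈ S.erase j, c i) := by ring
      _ ≤ (k + 1) * (k * ∑ i ∈ T, c i) := by gcongr
      _ = k * ((k + 1) * ∑ i ∈ T, c i) := by ring

theorem exists_subset_card_eq_div_mul_sum_le [Field R] [LinearOrder R] [IsStrictOrderedRing R]
    (c : ι → R) {m : ℕ} (S : Finset ι) (hm : m ≤ S.card) :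
    ∃ T ⊆ S, T.card = m ∧ (m / S.card : R) * ∑ i ∈ S, c i ≤ ∑ i ∈ T, c i := by
  obtain ⟨T, hTS, hT, hsum⟩ := exists_subset_card_eq_mul_sum_le c S.card S rfl hm
  refine ⟨T, hTS, hT, ?_⟩
  rcases S.card.eq_zero_or_pos with hS | hS
  · simp [card_eq_zero.1 hS, show T = ∅ by simpa [card_eq_zero.1 hS] using hTS]
  · rw [div_mul_eq_mul_div, div_le_iff₀ (by exact_mod_cast hS), mul_comm _ (S.card : R)]
    exact hsum

end Averaging

section Scores

variable {n : ℕ}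

theorem score_nonneg {A : Matrix (Fin n) (Fin n) ℝ} (hA : IsValidMatrix A) (S : Finset (Fin n)) :
    0 ≤ score A S :=
  sum_nonneg fun i _ => sum_nonneg fun j _ => hA.1 i j

theorem score_le_optScore (A : Matrix (Fin n) (Fin n) ℝ) {S : Finset (Fin n)} {k : ℕ}
    (hS : S.card = k) : score A S ≤ optScore k A := by
  refine le_csSup ((Set.finite_range (score A)).bddAbove.mono ?_) ⟨S, hS, rfl⟩
  rintro _ ⟨T, -, rfl⟩
  exact ⟨T, rfl⟩

theorem exists_card_eq_optScore_eq_score (A : Matrix (Fin n) (Fin n) ℝ) {k : ℕ} (hk : k ≤ n) :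
    ∃ S : Finset (Fin n), S.card = k ∧ optScore k A = score A S := by
  obtain ⟨S, -, hS⟩ := exists_subset_card_eq (s := (univ : Finset (Fin n))) (by simpa using hk)
  have hne : {x : ℝ | ∃ S : Finset (Fin n), S.card = k ∧ score A S = x}.Nonempty :=
    ⟨score A S, S, hS, rfl⟩
  have hfin : {x : ℝ | ∃ S : Finset (Fin n), S.card = k ∧ score A S = x}.Finite :=
    (Set.finite_range (score A)).subset <| by rintro _ ⟨T, -, rfl⟩; exact ⟨T, rfl⟩
  obtain ⟨T, hT, hscore⟩ := hne.csSup_mem hfin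
  exact ⟨T, hT, hscore.symm⟩

theorem exists_subset_card_eq_div_mul_score_le (A : Matrix (Fin n) (Fin n) ℝ)
    {S : Finset (Fin n)} {m : ℕ} (hm : m ≤ S.card) :
    ∃ T ⊆ S, T.card = m ∧ (m / S.card : ℝ) * score A S ≤ score A T := by
  have hcol (T : Finset (Fin n)) : score A T = ∑ j ∈ T, ∑ i, A i j := sum_comm
  simp only [hcol]
  exact exists_subset_card_eq_div_mul_sum_le (fun j => ∑ i, A i j) S hm

end Scores

section Padding

def padMatrix {n : ℕ} (N : ℕ) (A : Matrix (Fin n) (Fin n) ℝ) : Matrix (Fin N) (Fin N) ℝ :=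
  fun i j => if hij : (i : ℕ) < n ∧ (j : ℕ) < n then A ⟨i, hij.1⟩ ⟨j, hij.2⟩ else 0

variable {n N : ℕ}

noncomputable def restrictMechanism (h : n ≤ N) (g : Matrix (Fin N) (Fin N) ℝ → Finset (Fin N))
    (A : Matrix (Fin n) (Fin n) ℝ) : Finset (Fin n) :=
  (g (padMatrix N A)).preimage (Fin.castLE h) (Fin.castLE_injective h).injOn

variable {h : n ≤ N}

@[simp]
theorem padMatrix_castLE (A : Matrix (Fin n) (Fin n) ℝ) (i j : Fin n) :
    padMatrix N A (Fin.castLE h i) (Fin.castLE h j) = A i j := by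
  simp [padMatrix]

theorem IsValidMatrix.padMatrix {A : Matrix (Fin n) (Fin n) ℝ} (hA : IsValidMatrix A) :
    IsValidMatrix (padMatrix N A) := by
  refine ⟨fun i j => ?_, fun i => ?_⟩ <;> unfold _root_.padMatrix <;> split_ifs
  exacts [hA.1 _ _, le_rfl, hA.2 _, rfl]

theorem score_padMatrix (h : n ≤ N) (A : Matrix (Fin n) (Fin n) ℝ) (S : Finset (Fin N)) :
    score (padMatrix N A) S =
      score A (S.preimage (Fin.castLE h) (Fin.castLE_injective h).injOn) := by
  have hout : ∀ i ∉ Set.range (Fin.castLE h), ∀ j,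
      padMatrix N A i j = 0 ∧ padMatrix N A j i = 0 := by
    intro i hi j
    have hi : ¬ (i : ℕ) < n := by simpa [Fin.range_castLE] using hi
    simp [_root_.padMatrix, hi]
  symm
  refine Fintype.sum_of_injective _ (Fin.castLE_injective h) _ _
    (fun i hi => sum_eq_zero fun j _ => (hout i hi j).1) fun i => ?_
  rw [← sum_preimage _ _ (Fin.castLE_injective h).injOn _ fun j _ hj => (hout j hj _).2]
  simp

theorem score_restrictMechanism (g : Matrix (Fin N) (Fin N) ℝ → Finset (Fin N))
    (A : Matrix (Fin n) (Fin n) ℝ) :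
    score A (restrictMechanism h g A) = score (padMatrix N A) (g (padMatrix N A)) :=
  (score_padMatrix h A _).symm

theorem card_restrictMechanism_le (g : Matrix (Fin N) (Fin N) ℝ → Finset (Fin N))
    (A : Matrix (Fin n) (Fin n) ℝ) : (restrictMechanism h g A).card ≤ (g (padMatrix N A)).card :=
  card_le_card_of_injOn (Fin.castLE h) (fun _ hi => mem_preimage.1 hi)
    (Fin.castLE_injective h).injOn

theorem padMatrix_row_eq_of_ne {A A' : Matrix (Fin n) (Fin n) ℝ} {i : Fin n}
    (hA : ∀ i', i' ≠ i → A i' = A' i') {i' : Fin N} (hi' : i' ≠ Fin.castLE h i) :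
    padMatrix N A i' = padMatrix N A' i' := by
  funext j
  unfold padMatrix
  split_ifs with hij
  · rw [hA _ fun hc => hi' (by rw [← hc]; rfl)]
  · rfl

theorem Impartial.restrictMechanism {g : Matrix (Fin N) (Fin N) ℝ → Finset (Fin N)}
    (hg : Impartial g) : Impartial (restrictMechanism h g) := fun _ _ hA hA' i hrows =>
  mem_preimage.trans <| (hg _ _ hA.padMatrix hA'.padMatrix (Fin.castLE h i)
    fun _ => padMatrix_row_eq_of_ne hrows).trans mem_preimage.symm

theorem div_mul_optScore_le_optScore_padMatrix (h : n ≤ N) (A : Matrix (Fin n) (Fin n) ℝ)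
    {m k : ℕ} (hmk : m ≤ k) (hkn : k ≤ n) :
    (m / k : ℝ) * optScore k A ≤ optScore m (padMatrix N A) := by
  obtain ⟨S, hS, hopt⟩ := exists_card_eq_optScore_eq_score A hkn
  obtain ⟨T, -, hT, hST⟩ := exists_subset_card_eq_div_mul_score_le A (m := m) (hS ▸ hmk)
  calc (m / k : ℝ) * optScore k A ≤ score A T := by rwa [hopt, ← hS]
    _ = score (padMatrix N A) (T.map (Fin.castLEEmb h)) := by
      rw [score_padMatrix h]
      congr
      exact (preimage_map (Fin.castLEEmb h) T).symm
    _ ≤ optScore m (padMatrix N A) := score_le_optScore _ (by rw [card_map, hT])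

theorem AlphaOptimal.restrictMechanism {g : Matrix (Fin N) (Fin N) ℝ → Finset (Fin N)} {m k : ℕ}
    {α : ℝ} (hg : AlphaOptimal m g α) (hmk : m ≤ k) (hkn : k ≤ n) :
    AlphaOptimal k (restrictMechanism h g) (m / k * α) := by
  intro A hA
  rw [score_restrictMechanism]
  rcases le_or_gt 0 α with hα | hα
  · calc m / k * α * optScore k A = α * (m / k * optScore k A) := by ring
      _ ≤ α * optScore m (padMatrix N A) := by
        gcongr
        exact div_mul_optScore_le_optScore_padMatrix h A hmk hkn
      _ ≤ score (padMatrix N A) (g (padMatrix N A)) := hg _ hA.padMatrix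
  · obtain ⟨S, -, hopt⟩ := exists_card_eq_optScore_eq_score A hkn
    have hcoef : (m / k : ℝ) * α ≤ 0 := mul_nonpos_of_nonneg_of_nonpos (by positivity) hα.le
    calc m / k * α * optScore k A ≤ 0 :=
          mul_nonpos_of_nonpos_of_nonneg hcoef (hopt ▸ score_nonneg hA S)
      _ ≤ _ := score_nonneg hA.padMatrix _

end Padding

/-- Generalization lemma: an impartial `α̃`-optimal `(ñ,k̃)`-selection mechanism with
`k̃ ≤ k < n ≤ ñ` yields an impartial `(k̃/k)·α̃`-optimal `(n,k)`-selection mechanism. -/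
theorem stmt8 (ktil k n ntil : ℕ) (h1 : ktil ≤ k) (h2 : k < n) (h3 : n ≤ ntil)
    (αtil : ℝ)
    (hex : ∃ g : Matrix (Fin ntil) (Fin ntil) ℝ → Finset (Fin ntil),
      (∀ A, (g A).card ≤ ktil) ∧ Impartial g ∧ AlphaOptimal ktil g αtil) :
    ∃ f : Matrix (Fin n) (Fin n) ℝ → Finset (Fin n),
      (∀ A, (f A).card ≤ k) ∧ Impartial f ∧
      AlphaOptimal k f (((ktil : ℝ) / (k : ℝ)) * αtil) := by
  obtain ⟨g, hg_card, hg_impartial, hg_optimal⟩ := hex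
  exact ⟨restrictMechanism h3 g,
    fun A => (card_restrictMechanism_le g A).trans ((hg_card _).trans h1),
    hg_impartial.restrictMechanism, hg_optimal.restrictMechanism h1 h2.le⟩
end

section
/- Let n, m, k ∈ ℕ with 1 < k < n, m·k ≤ n, and k - (k mod 2) ≥ 2√n (equivalently, (k - k mod 2)² ≥ 4n). Then there exists an (n,m,k)-assignment mechanism that is impartial and α-optimal with α = (k - k mod 2) / (2k · ⌈2n / (k - k mod 2)⌉). -/
open Finset

/-- A feasible assignment: `m` pairwise disjoint sets of agents, each of
cardinality at most `k`. -/
def FeasibleAssignment {n : ℕ} (m k : ℕ) (X : Fin m → Finset (Fin n)) : Prop :=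
  (∀ ℓ, (X ℓ).card ≤ k) ∧ ∀ ℓ ℓ', ℓ ≠ ℓ' → Disjoint (X ℓ) (X ℓ')

/-- Total score of an assignment: the sum over the jobs of the score of the set
assigned to each job. -/
def totalScore {n m : ℕ} (A : Fin m → Matrix (Fin n) (Fin n) ℝ)
    (X : Fin m → Finset (Fin n)) : ℝ :=
  ∑ ℓ, score (A ℓ) (X ℓ)

/-- The maximum total score over all feasible assignments with capacity `k`. -/
noncomputable def optAssign {n : ℕ} (m k : ℕ)
    (A : Fin m → Matrix (Fin n) (Fin n) ℝ) : ℝ :=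
  sSup {x : ℝ | ∃ X : Fin m → Finset (Fin n),
    FeasibleAssignment m k X ∧ totalScore A X = x}

/-- Impartiality of an `(n,m,k)`-assignment mechanism. -/
def ImpartialAssign {n m : ℕ}
    (f : (Fin m → Matrix (Fin n) (Fin n) ℝ) → (Fin m → Finset (Fin n))) : Prop :=
  ∀ A A' : Fin m → Matrix (Fin n) (Fin n) ℝ,
    (∀ ℓ, IsValidMatrix (A ℓ)) → (∀ ℓ, IsValidMatrix (A' ℓ)) →
    ∀ i : Fin n, (∀ ℓ, ∀ i', i' ≠ i → A ℓ i' = A' ℓ i') →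
      ∀ ℓ, (i ∈ f A ℓ ↔ i ∈ f A' ℓ)

/-- `α`-optimality of an `(n,m,k)`-assignment mechanism. -/
def AlphaOptimalAssign {n m : ℕ} (k : ℕ)
    (f : (Fin m → Matrix (Fin n) (Fin n) ℝ) → (Fin m → Finset (Fin n)))
    (α : ℝ) : Prop :=
  ∀ A : Fin m → Matrix (Fin n) (Fin n) ℝ, (∀ ℓ, IsValidMatrix (A ℓ)) →
    α * optAssign m k A ≤ totalScore A (f A)

/-!
Let `K = ⌊k/2⌋` and `R = ⌈n/K⌉`, so that `m ≤ R ≤ K`, and pad the jobs with `R - m` dummy jobs of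
weight zero. Place the agents in a `K × R` rectangle and use two partitions of them into `K` classes
of at most `R` agents each: the rows and the wrapped diagonals. Inside a class, positions are matched
to the `R` jobs by a cyclic shift, chosen to maximise the weight the class receives from agents
outside it, which does not depend on the ballots of the class's own members. Averaging over the `R`
shifts, each partition collects a `1/R` fraction of all outside-class weight; since a row and a
diagonal share at most one agent, every vote is outside-class for one of the two partitions. Each
agent then takes the better of its two offers, judged by outside-class weight only; this keeps half
of what was collected, hence a `1/(2R)` fraction of the total weight, which bounds the optimum. Each
job receives at most one agent per class, i.e. at most `2K ≤ k` agents.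
-/

open Function

noncomputable def argmax {β γ : Type*} [Finite β] [Nonempty β] [LinearOrder γ] (v : β → γ) : β :=
  (Finite.exists_max v).choose

lemma le_argmax {β γ : Type*} [Finite β] [Nonempty β] [LinearOrder γ] (v : β → γ) (b : β) :
    v b ≤ v (argmax v) :=
  (Finite.exists_max v).choose_spec b

section OutsideVotes

variable {α ι ι₁ ι₂ : Type*} [Fintype α] {R : ℕ}

/-- A labelling `e j = (c, p)` puts agent `j` in class `c` at position `p`. -/
def outsideVotes [DecidableEq ι] (e : α → ι × Fin R) (B : Matrix α α ℝ) (j : α) : ℝ :=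
  ∑ i with (e i).1 ≠ (e j).1, B i j

lemma outsideVotes_le_sum [DecidableEq ι] (e : α → ι × Fin R) {B : Matrix α α ℝ}
    (hB : ∀ i j, 0 ≤ B i j) (j : α) : outsideVotes e B j ≤ ∑ i, B i j :=
  sum_le_sum_of_subset_of_nonneg (filter_subset _ _) fun i _ _ => hB i j

lemma outsideVotes_congr_row [DecidableEq ι] {e : α → ι × Fin R} {B B' : Matrix α α ℝ} {i j : α}
    (hB : ∀ i', i' ≠ i → B i' = B' i') (hj : (e j).1 = (e i).1) :
    outsideVotes e B j = outsideVotes e B' j :=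
  sum_congr rfl fun i' hi' => by
    rw [hB i' fun h => (mem_filter.1 hi').2 (h ▸ hj.symm)]

lemma sum_le_outsideVotes_add_outsideVotes [DecidableEq ι₁] [DecidableEq ι₂]
    (e₁ : α → ι₁ × Fin R) (e₂ : α → ι₂ × Fin R) (horth : Injective fun j => ((e₁ j).1, (e₂ j).1))
    {B : Matrix α α ℝ} (hB : ∀ i j, 0 ≤ B i j) (hdiag : ∀ i, B i i = 0) (j : α) :
    ∑ i, B i j ≤ outsideVotes e₁ B j + outsideVotes e₂ B j := by
  rw [outsideVotes, outsideVotes, sum_filter, sum_filter, ← sum_add_distrib]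
  refine sum_le_sum fun i _ => ?_
  by_cases hij : i = j
  · subst hij
    simp [hdiag]
  · have hsep : (e₁ i).1 ≠ (e₁ j).1 ∨ (e₂ i).1 ≠ (e₂ j).1 := by
      by_contra! h
      exact hij (horth (Prod.ext h.1 h.2))
    have hBij := hB i j
    rcases hsep with h | h <;> split_ifs <;> linarith

end OutsideVotes

section CyclicShifts

variable {α ι : Type*} [Fintype α] [DecidableEq ι] {R : ℕ} [NeZero R] (e : α → ι × Fin R)

noncomputable def classShift (w : Fin R → α → ℝ) (c : ι) : Fin R :=
  argmax fun t => ∑ j with (e j).1 = c, w ((e j).2 + t) j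

lemma sum_shift_le_sum_classShift (w : Fin R → α → ℝ) (c : ι) (t : Fin R) :
    ∑ j with (e j).1 = c, w ((e j).2 + t) j ≤
      ∑ j with (e j).1 = c, w ((e j).2 + classShift e w c) j :=
  le_argmax (fun t => ∑ j with (e j).1 = c, w ((e j).2 + t) j) t

lemma classShift_congr {w w' : Fin R → α → ℝ} {c : ι}
    (h : ∀ s j, (e j).1 = c → w s j = w' s j) : classShift e w c = classShift e w' c := by
  have hv : (fun t => ∑ j with (e j).1 = c, w ((e j).2 + t) j) =
      fun t => ∑ j with (e j).1 = c, w' ((e j).2 + t) j :=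
    funext fun t => sum_congr rfl fun j hj => h _ _ (mem_filter.1 hj).2
  unfold classShift
  rw [hv]

theorem sum_sum_le_mul_sum_classShift [Fintype ι] (w : Fin R → α → ℝ) :
    ∑ j, ∑ s, w s j ≤ R * ∑ j, w ((e j).2 + classShift e w (e j).1) j :=
  calc ∑ j, ∑ s, w s j = ∑ c, ∑ t, ∑ j with (e j).1 = c, w ((e j).2 + t) j := by
        rw [← sum_fiberwise univ fun j => (e j).1]
        refine sum_congr rfl fun c _ => ?_
        conv_rhs => rw [sum_comm]
        exact sum_congr rfl fun j _ => (Equiv.sum_comp (Equiv.addLeft _) _).symm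
    _ ≤ ∑ c, R * ∑ j with (e j).1 = c, w ((e j).2 + classShift e w c) j := by
        refine sum_le_sum fun c _ => ?_
        simpa using sum_le_card_nsmul univ _ _ fun t _ => sum_shift_le_sum_classShift e w c t
    _ = R * ∑ j, w ((e j).2 + classShift e w (e j).1) j := by
        rw [← mul_sum, ← sum_fiberwise univ fun j => (e j).1]
        congr 1
        refine sum_congr rfl fun c _ => sum_congr rfl fun j hj => ?_
        rw [(mem_filter.1 hj).2]

noncomputable def shiftedJob (A : Fin R → Matrix α α ℝ) (j : α) : Fin R :=
  (e j).2 + classShift e (fun s => outsideVotes e (A s)) (e j).1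

noncomputable def shiftCredit (A : Fin R → Matrix α α ℝ) (j : α) : ℝ :=
  outsideVotes e (A (shiftedJob e A j)) j

theorem sum_sum_outsideVotes_le_mul_sum_shiftCredit [Fintype ι] (A : Fin R → Matrix α α ℝ) :
    ∑ s, ∑ j, outsideVotes e (A s) j ≤ R * ∑ j, shiftCredit e A j := by
  rw [sum_comm]
  exact sum_sum_le_mul_sum_classShift e _

variable {e}

lemma shiftedJob_congr_row {A A' : Fin R → Matrix α α ℝ} {i : α}
    (hA : ∀ s, ∀ i', i' ≠ i → A s i' = A' s i') : shiftedJob e A i = shiftedJob e A' i := by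
  rw [shiftedJob, shiftedJob, classShift_congr e fun s j hj => outsideVotes_congr_row (hA s) hj]

lemma shiftCredit_congr_row {A A' : Fin R → Matrix α α ℝ} {i : α}
    (hA : ∀ s, ∀ i', i' ≠ i → A s i' = A' s i') : shiftCredit e A i = shiftCredit e A' i := by
  rw [shiftCredit, shiftCredit, shiftedJob_congr_row hA, outsideVotes_congr_row (hA _) rfl]

lemma card_filter_shiftedJob_eq_le [Fintype ι] (he : Injective e) (A : Fin R → Matrix α α ℝ)
    (s : Fin R) : #{j | shiftedJob e A j = s} ≤ Fintype.card ι := by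
  rw [← card_univ]
  refine card_le_card_of_injOn (fun j => (e j).1) (fun _ _ => mem_univ _) fun j hj j' hj' hc => ?_
  rw [mem_coe, mem_filter, shiftedJob] at hj hj'
  dsimp only at hc
  rw [hc] at hj
  exact he (Prod.ext hc (add_right_cancel (hj.2.trans hj'.2.symm)))

end CyclicShifts

section GridJob

variable {α ι₁ ι₂ : Type*} [Fintype α] [DecidableEq ι₁] [DecidableEq ι₂] {R : ℕ} [NeZero R]
  (e₁ : α → ι₁ × Fin R) (e₂ : α → ι₂ × Fin R)

noncomputable def gridJob (A : Fin R → Matrix α α ℝ) (j : α) : Fin R :=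
  if shiftCredit e₂ A j ≤ shiftCredit e₁ A j then shiftedJob e₁ A j else shiftedJob e₂ A j

lemma gridJob_congr_row {A A' : Fin R → Matrix α α ℝ} {i : α}
    (hA : ∀ s, ∀ i', i' ≠ i → A s i' = A' s i') : gridJob e₁ e₂ A i = gridJob e₁ e₂ A' i := by
  simp only [gridJob, shiftCredit_congr_row hA, shiftedJob_congr_row hA]

lemma card_filter_gridJob_eq_le [DecidableEq α] [Fintype ι₁] [Fintype ι₂] (he₁ : Injective e₁)
    (he₂ : Injective e₂) (A : Fin R → Matrix α α ℝ) (s : Fin R) :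
    #{j | gridJob e₁ e₂ A j = s} ≤ Fintype.card ι₁ + Fintype.card ι₂ :=
  calc #{j | gridJob e₁ e₂ A j = s}
      ≤ #(({j | shiftedJob e₁ A j = s} : Finset α) ∪ ({j | shiftedJob e₂ A j = s} : Finset α)) := by
        refine card_le_card fun j hj => ?_
        rw [mem_filter, gridJob] at hj
        split_ifs at hj <;> simp [hj.2]
    _ ≤ _ := card_union_le _ _
    _ ≤ _ := add_le_add (card_filter_shiftedJob_eq_le he₁ A s)
        (card_filter_shiftedJob_eq_le he₂ A s)

lemma shiftCredit_add_shiftCredit_le {A : Fin R → Matrix α α ℝ} (hA : ∀ s i j, 0 ≤ A s i j)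
    (j : α) : shiftCredit e₁ A j + shiftCredit e₂ A j ≤ 2 * ∑ i, A (gridJob e₁ e₂ A j) i j := by
  have h₁ : shiftCredit e₁ A j ≤ ∑ i, A (shiftedJob e₁ A j) i j := outsideVotes_le_sum e₁ (hA _) j
  have h₂ : shiftCredit e₂ A j ≤ ∑ i, A (shiftedJob e₂ A j) i j := outsideVotes_le_sum e₂ (hA _) j
  unfold gridJob
  split_ifs <;> linarith

theorem sum_sum_sum_le_two_mul_sum_gridJob [Fintype ι₁] [Fintype ι₂]
    (horth : Injective fun j => ((e₁ j).1, (e₂ j).1)) {A : Fin R → Matrix α α ℝ}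
    (hA : ∀ s i j, 0 ≤ A s i j) (hdiag : ∀ s i, A s i i = 0) :
    ∑ s, ∑ j, ∑ i, A s i j ≤ 2 * R * ∑ j, ∑ i, A (gridJob e₁ e₂ A j) i j :=
  calc ∑ s, ∑ j, ∑ i, A s i j
      ≤ ∑ s, ∑ j, (outsideVotes e₁ (A s) j + outsideVotes e₂ (A s) j) :=
        sum_le_sum fun s _ => sum_le_sum fun j _ =>
          sum_le_outsideVotes_add_outsideVotes e₁ e₂ horth (hA s) (hdiag s) j
    _ = ∑ s, ∑ j, outsideVotes e₁ (A s) j + ∑ s, ∑ j, outsideVotes e₂ (A s) j := by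
        simp only [sum_add_distrib]
    _ ≤ R * ∑ j, shiftCredit e₁ A j + R * ∑ j, shiftCredit e₂ A j :=
        add_le_add (sum_sum_outsideVotes_le_mul_sum_shiftCredit e₁ A)
          (sum_sum_outsideVotes_le_mul_sum_shiftCredit e₂ A)
    _ = R * ∑ j, (shiftCredit e₁ A j + shiftCredit e₂ A j) := by rw [sum_add_distrib, mul_add]
    _ ≤ R * ∑ j, 2 * ∑ i, A (gridJob e₁ e₂ A j) i j := by
        gcongr with j
        exact shiftCredit_add_shiftCredit_le e₁ e₂ hA j
    _ = 2 * R * ∑ j, ∑ i, A (gridJob e₁ e₂ A j) i j := by rw [← mul_sum]; ring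

end GridJob

def padJobs {M : Type*} [Zero M] {m : ℕ} (R : ℕ) (A : Fin m → M) (s : Fin R) : M :=
  if h : (s : ℕ) < m then A (s.castLT h) else 0

lemma sum_padJobs {M N : Type*} [Zero M] [AddCommMonoid N] {m R : ℕ} (hmR : m ≤ R)
    (A : Fin m → M) (F : Fin R → M → N) (hF : ∀ s, F s 0 = 0) :
    ∑ s, F s (padJobs R A s) = ∑ ℓ, F (Fin.castLE hmR ℓ) (A ℓ) := by
  refine (Fintype.sum_of_injective _ (Fin.castLE_injective hmR) _ _ (fun s hs => ?_)
    fun ℓ => by rw [padJobs, dif_pos (by simp)]; rfl).symm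
  rw [padJobs, dif_neg fun h => hs ⟨s.castLT h, Fin.ext rfl⟩, hF]

lemma padJobs_congr_row {α : Type*} {m R : ℕ} {A A' : Fin m → Matrix α α ℝ} {i : α}
    (hA : ∀ ℓ, ∀ i', i' ≠ i → A ℓ i' = A' ℓ i') (s : Fin R) :
    ∀ i', i' ≠ i → padJobs R A s i' = padJobs R A' s i' := by
  intro i' hi'
  unfold padJobs
  split_ifs
  exacts [hA _ i' hi', rfl]

lemma score_eq_sum_sum {n : ℕ} (B : Matrix (Fin n) (Fin n) ℝ) (S : Finset (Fin n)) :
    score B S = ∑ j ∈ S, ∑ i, B i j :=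
  sum_comm

lemma sum_score_fiberwise {n : ℕ} {κ : Type*} [Fintype κ] [DecidableEq κ] (g : Fin n → κ)
    (A : κ → Matrix (Fin n) (Fin n) ℝ) :
    ∑ s, score (A s) {j | g j = s} = ∑ j, ∑ i, A (g j) i j := by
  rw [← sum_fiberwise univ g]
  refine sum_congr rfl fun s _ => ?_
  rw [score_eq_sum_sum]
  exact sum_congr rfl fun j hj => by rw [(mem_filter.1 hj).2]

lemma totalScore_nonneg {n m : ℕ} {A : Fin m → Matrix (Fin n) (Fin n) ℝ}
    (hA : ∀ ℓ i j, 0 ≤ A ℓ i j) (X : Fin m → Finset (Fin n)) : 0 ≤ totalScore A X :=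
  sum_nonneg fun ℓ _ => sum_nonneg fun i _ => sum_nonneg fun j _ => hA ℓ i j

lemma optAssign_nonneg {n m : ℕ} (k : ℕ) {A : Fin m → Matrix (Fin n) (Fin n) ℝ}
    (hA : ∀ ℓ i j, 0 ≤ A ℓ i j) : 0 ≤ optAssign m k A :=
  Real.sSup_nonneg fun _ ⟨X, _, hX⟩ => hX ▸ totalScore_nonneg hA X

lemma optAssign_le_totalScore_univ {n m : ℕ} (k : ℕ) {A : Fin m → Matrix (Fin n) (Fin n) ℝ}
    (hA : ∀ ℓ i j, 0 ≤ A ℓ i j) : optAssign m k A ≤ totalScore A fun _ => univ := by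
  refine Real.sSup_le ?_ (totalScore_nonneg hA _)
  rintro _ ⟨X, -, rfl⟩
  exact sum_le_sum fun ℓ _ => sum_le_sum fun i _ =>
    sum_le_sum_of_subset_of_nonneg (subset_univ _) fun j _ _ => hA ℓ i j

lemma AlphaOptimalAssign.mono {n m k : ℕ}
    {f : (Fin m → Matrix (Fin n) (Fin n) ℝ) → (Fin m → Finset (Fin n))} {α β : ℝ}
    (hf : AlphaOptimalAssign k f β) (hαβ : α ≤ β) : AlphaOptimalAssign k f α := fun A hA =>
  (mul_le_mul_of_nonneg_right hαβ (optAssign_nonneg k fun ℓ => (hA ℓ).1)).trans (hf A hA)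

section GridMechanism

variable {n m R : ℕ} [NeZero R] {ι₁ ι₂ : Type*} [DecidableEq ι₁] [DecidableEq ι₂]
  (e₁ : Fin n → ι₁ × Fin R) (e₂ : Fin n → ι₂ × Fin R) (hmR : m ≤ R)

noncomputable def gridMechanism (A : Fin m → Matrix (Fin n) (Fin n) ℝ) (ℓ : Fin m) :
    Finset (Fin n) :=
  {j | gridJob e₁ e₂ (padJobs R A) j = Fin.castLE hmR ℓ}

lemma feasibleAssignment_gridMechanism [Fintype ι₁] [Fintype ι₂] {k : ℕ}
    (hk : Fintype.card ι₁ + Fintype.card ι₂ ≤ k) (he₁ : Injective e₁) (he₂ : Injective e₂)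
    (A : Fin m → Matrix (Fin n) (Fin n) ℝ) :
    FeasibleAssignment m k (gridMechanism e₁ e₂ hmR A) :=
  ⟨fun _ => (card_filter_gridJob_eq_le e₁ e₂ he₁ he₂ _ _).trans hk, fun _ _ hne =>
    disjoint_filter.2 fun _ _ h h' => hne (Fin.castLE_injective hmR (h.symm.trans h'))⟩

lemma impartialAssign_gridMechanism : ImpartialAssign (gridMechanism e₁ e₂ hmR) := by
  intro A A' _ _ i hA ℓ
  simp only [gridMechanism, mem_filter, mem_univ, true_and,
    gridJob_congr_row e₁ e₂ (padJobs_congr_row hA)]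

lemma totalScore_gridMechanism (A : Fin m → Matrix (Fin n) (Fin n) ℝ) :
    totalScore A (gridMechanism e₁ e₂ hmR A) =
      ∑ j, ∑ i, padJobs R A (gridJob e₁ e₂ (padJobs R A) j) i j := by
  rw [← sum_score_fiberwise, sum_padJobs hmR A (fun s B => score B _) fun s => by simp [score]]
  rfl

lemma alphaOptimalAssign_gridMechanism [Fintype ι₁] [Fintype ι₂] (k : ℕ)
    (horth : Injective fun j => ((e₁ j).1, (e₂ j).1)) :
    AlphaOptimalAssign k (gridMechanism e₁ e₂ hmR) (1 / (2 * R)) := by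
  intro A hA
  have hpad : ∀ s i j, 0 ≤ padJobs R A s i j := fun s i j => by
    unfold padJobs; split_ifs
    exacts [(hA _).1 i j, le_rfl]
  have hdiag : ∀ s i, padJobs R A s i i = 0 := fun s i => by
    unfold padJobs; split_ifs
    exacts [(hA _).2 i, rfl]
  have hmass : totalScore A (fun _ => univ) = ∑ s, ∑ j, ∑ i, padJobs R A s i j := by
    rw [sum_padJobs hmR A (fun _ B => ∑ j, ∑ i, B i j) fun _ => by simp]
    exact sum_congr rfl fun ℓ _ => score_eq_sum_sum _ _
  have hR : (0 : ℝ) < R := by exact_mod_cast Nat.pos_of_neZero R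
  calc 1 / (2 * R) * optAssign m k A ≤ 1 / (2 * R) * totalScore A fun _ => univ := by
        gcongr
        exact optAssign_le_totalScore_univ k fun ℓ => (hA ℓ).1
    _ ≤ 1 / (2 * R) * (2 * R * ∑ j, ∑ i, padJobs R A (gridJob e₁ e₂ (padJobs R A) j) i j) := by
        rw [hmass]
        gcongr
        exact sum_sum_sum_le_two_mul_sum_gridJob e₁ e₂ horth hpad hdiag
    _ = totalScore A (gridMechanism e₁ e₂ hmR A) := by
        rw [totalScore_gridMechanism]
        field_simp

end GridMechanism

lemma le_mul_ceil_div (n : ℕ) {K : ℕ} (hK : 0 < K) : n ≤ K * ⌈(n : ℝ) / K⌉₊ := by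
  have : (n : ℝ) ≤ K * ⌈(n : ℝ) / K⌉₊ := by
    rw [mul_comm, ← div_le_iff₀ (by exact_mod_cast hK)]
    exact Nat.le_ceil _
  exact_mod_cast this

lemma ceil_div_le {n K L : ℕ} (hK : 0 < K) (h : n ≤ K * L) : ⌈(n : ℝ) / K⌉₊ ≤ L :=
  Nat.ceil_le.2 <| (div_le_iff₀ (by exact_mod_cast hK)).2 <| by rw [mul_comm]; exact_mod_cast h

lemma le_ceil_div {m n K : ℕ} (hK : 0 < K) (h : m * K ≤ n) : m ≤ ⌈(n : ℝ) / K⌉₊ :=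
  Nat.cast_le.1 <| ((le_div_iff₀ (by exact_mod_cast hK)).2 (by exact_mod_cast h)).trans
    (Nat.le_ceil _)

/-- Agents fill a `K × R` rectangle row by row; `e₂` records rows and `e₁` wrapped diagonals,
which meet every row at most once because `R ≤ K`. -/
lemma exists_orthogonal_labellings {n K R : ℕ} [NeZero K] (hRK : R ≤ K) (hn : n ≤ K * R) :
    ∃ e₁ e₂ : Fin n → Fin K × Fin R,
      Injective e₁ ∧ Injective e₂ ∧ Injective fun j => ((e₁ j).1, (e₂ j).1) := by
  set p : Fin n → Fin K × Fin R := finProdFinEquiv.symm ∘ Fin.castLE hn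
  have hp : Injective p := finProdFinEquiv.symm.injective.comp (Fin.castLE_injective hn)
  refine ⟨fun j => ((p j).1 + Fin.castLE hRK (p j).2, (p j).2), p, fun j j' h => ?_, hp,
    fun j j' h => ?_⟩
  · simp only [Prod.mk.injEq] at h
    obtain ⟨h₁, h₂⟩ := h
    rw [h₂] at h₁
    exact hp (Prod.ext (add_right_cancel h₁) h₂)
  · simp only [Prod.mk.injEq] at h
    obtain ⟨h₁, h₂⟩ := h
    rw [h₂] at h₁
    exact hp (Prod.ext h₂ (Fin.castLE_injective hRK (add_left_cancel h₁)))

theorem stmt14_general (n m k : ℕ) (h2 : k < n) (hmk : m * k ≤ n)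
    (h3 : 4 * n ≤ (k - k % 2) ^ 2) :
    ∃ f : (Fin m → Matrix (Fin n) (Fin n) ℝ) → (Fin m → Finset (Fin n)),
      (∀ A, FeasibleAssignment m k (f A)) ∧ ImpartialAssign f ∧
      AlphaOptimalAssign k f
        (((k - k % 2 : ℕ) : ℝ) /
          (2 * (k : ℝ) * ((⌈(2 * (n : ℝ)) / ((k - k % 2 : ℕ) : ℝ)⌉ : ℤ) : ℝ))) := by
  obtain ⟨K, hK⟩ : ∃ K, k - k % 2 = 2 * K := ⟨k / 2, by omega⟩
  have hK0 : 0 < K := Nat.pos_of_ne_zero fun h => by simp [hK, h] at h3; omega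
  set R := ⌈(n : ℝ) / K⌉₊
  have hnKR : n ≤ K * R := le_mul_ceil_div n hK0
  have hRK : R ≤ K := ceil_div_le hK0 (by nlinarith)
  have hmR : m ≤ R := le_ceil_div hK0 ((Nat.mul_le_mul_left m (by omega : K ≤ k)).trans hmk)
  have : NeZero R := ⟨fun h => by simp [h] at hnKR; omega⟩
  have : NeZero K := ⟨hK0.ne'⟩
  obtain ⟨e₁, e₂, he₁, he₂, horth⟩ := exists_orthogonal_labellings hRK hnKR
  refine ⟨gridMechanism e₁ e₂ hmR,
    feasibleAssignment_gridMechanism e₁ e₂ hmR (by simp; omega) he₁ he₂,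
    impartialAssign_gridMechanism e₁ e₂ hmR,
    (alphaOptimalAssign_gridMechanism e₁ e₂ hmR k horth).mono ?_⟩
  rw [hK, Nat.cast_mul, Nat.cast_two, mul_div_mul_left _ _ two_ne_zero,
    ← natCast_ceil_eq_intCast_ceil (by positivity)]
  have hR0 : (0 : ℝ) < R := by exact_mod_cast Nat.pos_of_neZero R
  have hk0 : (0 : ℝ) < 2 * k := by exact_mod_cast (show 0 < 2 * k by omega)
  have h2Kk : (2 * K : ℝ) ≤ k := by exact_mod_cast (show 2 * K ≤ k by omega)
  rw [div_le_div_iff₀ (mul_pos hk0 hR0) (by positivity)]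
  nlinarith

/-- Deterministic impartial assignment with weights: for `1 < k < n`, `m·k ≤ n`
and `k - k % 2 ≥ 2√n`, there exists an impartial `(n,m,k)`-assignment mechanism
that is `α`-optimal with `α = (k - k % 2) / (2k·⌈2n/(k - k % 2)⌉)`. -/
theorem stmt14 (n m k : ℕ) (h1 : 1 < k) (h2 : k < n) (hmk : m * k ≤ n)
    (h3 : 4 * n ≤ (k - k % 2) ^ 2) :
    ∃ f : (Fin m → Matrix (Fin n) (Fin n) ℝ) → (Fin m → Finset (Fin n)),
      (∀ A, FeasibleAssignment m k (f A)) ∧ ImpartialAssign f ∧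
      AlphaOptimalAssign k f
        (((k - k % 2 : ℕ) : ℝ) /
          (2 * (k : ℝ) * ((⌈(2 * (n : ℝ)) / ((k - k % 2 : ℕ) : ℝ)⌉ : ℤ) : ℝ))) :=
  stmt14_general n m k h2 hmk h3
end
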